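/- The property of being isomorphic to a subspace of c₀(ℕ) is a three-space property: if X is a Banach space, Y a closed subspace, and both Y and X/Y are linearly isomorphic to subspaces of c₀(ℕ), then X is linearly isomorphic to a subspace of c₀(ℕ). -/

import Mathlib

open Filter Topology NormedSpace
open scoped ZeroAtInfty

set_option maxHeartbeats 1000000

/-- Build an element of `C₀(ℕ, ℝ)` from a finitely supported rational family. -/
noncomputable def finRatC0 (p : Σ N : ℕ, Fin N → ℚ) : C₀(ℕ, ℝ) where
  toFun := fun n => if h : n < p.1 then ((p.2 ⟨n, h⟩ : ℚ) : ℝ) else 0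
  continuous_toFun := continuous_of_discreteTopology
  zero_at_infty' := by
    rw [cocompact_eq_atTop]
    apply Tendsto.congr' _ tendsto_const_nhds
    filter_upwards [eventually_ge_atTop p.1] with n hn
    simp [Nat.not_lt.mpr hn]

theorem c0_norm_le {f : C₀(ℕ, ℝ)} {C : ℝ} (hC : 0 ≤ C) (h : ∀ n, |f n| ≤ C) : ‖f‖ ≤ C := by
  rw [← ZeroAtInftyContinuousMap.norm_toBCF_eq_norm]
  exact (BoundedContinuousFunction.norm_le hC).2 h

theorem c0_le_norm (f : C₀(ℕ, ℝ)) (n : ℕ) : |f n| ≤ ‖f‖ := by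
  rw [← ZeroAtInftyContinuousMap.norm_toBCF_eq_norm]
  exact (f.toBCF.norm_coe_le_norm n)

theorem c0_tendsto (f : C₀(ℕ, ℝ)) : Tendsto (fun n => f n) atTop (𝓝 0) := by
  have := f.zero_at_infty'
  rwa [cocompact_eq_atTop] at this

theorem sepC0 : TopologicalSpace.SeparableSpace C₀(ℕ, ℝ) := by
  refine ⟨⟨Set.range finRatC0, Set.countable_range _, ?_⟩⟩
  have : DenseRange finRatC0 := by
    rw [Metric.denseRange_iff]
    intro f r hr
    obtain ⟨N, hN⟩ := (Metric.tendsto_atTop.1 (c0_tendsto f)) (r / 2) (by positivity)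
    have hq : ∀ i : Fin N, ∃ q : ℚ, |f i - q| < r / 2 := fun i =>
      exists_rat_near (f i) (by positivity)
    choose q hqlt using hq
    refine ⟨⟨N, q⟩, ?_⟩
    have : dist f (finRatC0 ⟨N, q⟩) ≤ r / 2 := by
      rw [dist_eq_norm]
      apply c0_norm_le (by positivity)
      intro n
      have : (f - finRatC0 ⟨N, q⟩) n = f n - finRatC0 ⟨N, q⟩ n := rfl
      rw [this]
      by_cases h : n < N
      · have : finRatC0 ⟨N, q⟩ n = ((q ⟨n, h⟩ : ℚ) : ℝ) := by simp [finRatC0, h]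
        rw [this]
        exact (hqlt ⟨n, h⟩).le
      · have : finRatC0 ⟨N, q⟩ n = 0 := by simp [finRatC0, h]
        rw [this, sub_zero]
        have := hN n (Nat.not_lt.1 h)
        rw [dist_zero_right, Real.norm_eq_abs] at this
        exact this.le
    linarith [this]
  exact this

theorem sep_pull {W : Type*} [SeminormedAddCommGroup W] [NormedSpace ℝ W]
    (T : W →L[ℝ] C₀(ℕ, ℝ)) {c : ℝ} (hc : 0 < c) (hlow : ∀ w, c * ‖w‖ ≤ ‖T w‖) :
    TopologicalSpace.SeparableSpace W := by
  have hal : AntilipschitzWith (⟨c⁻¹, by positivity⟩ : NNReal) T := by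
    apply antilipschitzWith_iff_le_mul_dist.2
    intro x y
    have h1 := hlow (x - y)
    rw [map_sub] at h1
    rw [dist_eq_norm, dist_eq_norm]
    show ‖x - y‖ ≤ c⁻¹ * ‖T x - T y‖
    rw [mul_comm, ← le_div_iff₀ hc] at h1
    calc ‖x - y‖ ≤ ‖T x - T y‖ / c := h1
      _ = c⁻¹ * ‖T x - T y‖ := by rw [div_eq_inv_mul]
  haveI := sepC0
  haveI : SecondCountableTopology C₀(ℕ, ℝ) :=
    UniformSpace.secondCountable_of_separable _
  haveI : SecondCountableTopology W :=
    (hal.isUniformInducing T.uniformContinuous).isInducing.secondCountableTopology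
  infer_instance

theorem sep_ext {X : Type*} [NormedAddCommGroup X] [NormedSpace ℝ X]
    (Y : Submodule ℝ X)
    (hY : TopologicalSpace.SeparableSpace Y)
    (hQ : TopologicalSpace.SeparableSpace (X ⧸ Y)) :
    TopologicalSpace.SeparableSpace X := by
  obtain ⟨b, hb⟩ := TopologicalSpace.exists_dense_seq Y
  obtain ⟨qs, hqs⟩ := TopologicalSpace.exists_dense_seq (X ⧸ Y)
  choose v hv using fun n => Submodule.Quotient.mk_surjective Y (qs n)
  set F : ℕ × ℕ → X := fun p => v p.1 + (b p.2 : X) with hF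
  have hdense : DenseRange F := by
    rw [Metric.denseRange_iff]
    intro x r hr
    obtain ⟨n, hn⟩ := (Metric.denseRange_iff.1 hqs) (Submodule.Quotient.mk x) (r / 4) (by positivity)
    have hmk : ‖(Submodule.Quotient.mk (x - v n) : X ⧸ Y)‖ < r / 4 := by
      have : (Submodule.Quotient.mk (x - v n) : X ⧸ Y)
          = Submodule.Quotient.mk x - qs n := by rw [← hv n]; simp [Submodule.Quotient.mk_sub]
      rw [this, ← dist_eq_norm]
      exact hn
    obtain ⟨m, hm, hmlt⟩ := Submodule.Quotient.norm_mk_lt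
      (Submodule.Quotient.mk (x - v n) : X ⧸ Y) (show (0:ℝ) < r / 4 by positivity)
    have hmem : x - v n - m ∈ Y := by
      rw [← Submodule.Quotient.mk_eq_zero]
      simp only [Submodule.Quotient.mk_sub]
      rw [show (Submodule.Quotient.mk m : X ⧸ Y) = Submodule.Quotient.mk x - Submodule.Quotient.mk (v n) by rw [hm]; simp [Submodule.Quotient.mk_sub]]
      abel
    set y₀ : Y := ⟨x - v n - m, hmem⟩ with hy₀
    obtain ⟨k, hk⟩ := (Metric.denseRange_iff.1 hb) y₀ (r / 4) (by positivity)
    refine ⟨(n, k), ?_⟩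
    have hdy : dist ((y₀ : X)) ((b k : X)) < r / 4 := hk
    calc dist x (F (n, k)) = ‖x - (v n + (b k : X))‖ := by rw [dist_eq_norm]
      _ = ‖m + ((y₀ : X) - (b k : X))‖ := by
          congr 1
          have hcoe : ((y₀ : X)) = x - v n - m := rfl
          rw [hcoe]
          abel
      _ ≤ ‖m‖ + ‖(y₀ : X) - (b k : X)‖ := norm_add_le _ _
      _ < (r / 4 + r / 4) + r / 4 := by
          have h1 : ‖m‖ < r / 4 + r / 4 := lt_of_lt_of_le hmlt (by linarith [hmk.le])
          have h2 : ‖(y₀ : X) - (b k : X)‖ < r / 4 := by rwa [← dist_eq_norm]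
          linarith
      _ < r := by linarith
  exact ⟨⟨Set.range F, Set.countable_range _, hdense⟩⟩


section WD
variable {X : Type*} [NormedAddCommGroup X] [NormedSpace ℝ X]

/-- Weak-star-like premetric built from a countable family of points. -/
noncomputable def wD (u : ℕ → X) (φ ψ : X →L[ℝ] ℝ) : ℝ :=
  ∑' i, (2⁻¹ : ℝ) ^ i * min 1 |φ (u i) - ψ (u i)|

theorem wD_summable (u : ℕ → X) (φ ψ : X →L[ℝ] ℝ) :
    Summable fun i => (2⁻¹ : ℝ) ^ i * min 1 |φ (u i) - ψ (u i)| := by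
  apply Summable.of_nonneg_of_le
  · intro i
    exact mul_nonneg (by positivity) (le_min zero_le_one (abs_nonneg _))
  · intro i
    calc (2⁻¹ : ℝ) ^ i * min 1 |φ (u i) - ψ (u i)| ≤ (2⁻¹ : ℝ) ^ i * 1 :=
          mul_le_mul_of_nonneg_left (min_le_left _ _) (by positivity)
      _ = (2⁻¹ : ℝ) ^ i := mul_one _
  · exact summable_geometric_of_lt_one (by norm_num) (by norm_num)

theorem wD_nonneg (u : ℕ → X) (φ ψ : X →L[ℝ] ℝ) : 0 ≤ wD u φ ψ :=
  tsum_nonneg fun i => mul_nonneg (by positivity) (le_min zero_le_one (abs_nonneg _))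

theorem term_le_wD (u : ℕ → X) (φ ψ : X →L[ℝ] ℝ) (i : ℕ) :
    (2⁻¹ : ℝ) ^ i * min 1 |φ (u i) - ψ (u i)| ≤ wD u φ ψ :=
  Summable.le_tsum (wD_summable u φ ψ) i fun j _ =>
    mul_nonneg (by positivity) (le_min zero_le_one (abs_nonneg _))

theorem wD_tendsto_zero (u : ℕ → X) (g : ℕ → X →L[ℝ] ℝ) (G : X →L[ℝ] ℝ)
    (h : ∀ i, Tendsto (fun k => g k (u i)) atTop (𝓝 (G (u i)))) :
    Tendsto (fun k => wD u (g k) G) atTop (𝓝 0) := by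
  rw [Metric.tendsto_atTop]
  intro ε hε
  -- choose I with the geometric tail `2 * (2⁻¹)^I < ε/2`
  have htail : Tendsto (fun I : ℕ => 2 * (2⁻¹ : ℝ) ^ I) atTop (𝓝 0) := by
    have := tendsto_pow_atTop_nhds_zero_of_lt_one (r := (2⁻¹ : ℝ)) (by norm_num) (by norm_num)
    simpa using this.const_mul 2
  obtain ⟨I, hI⟩ := (Metric.tendsto_atTop.1 htail) (ε / 2) (by positivity)
  have hIeps : 2 * (2⁻¹ : ℝ) ^ I < ε / 2 := by
    have := hI I le_rfl
    rwa [Real.dist_eq, sub_zero, abs_of_pos (by positivity)] at this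
  -- eventually each of the first I coordinates is small
  have hev : ∀ᶠ k in atTop, ∀ i ∈ Finset.range I,
      |g k (u i) - G (u i)| < ε / (2 * (I + 1)) := by
    rw [Filter.eventually_all_finset]
    intro i _
    obtain ⟨N, hN⟩ := (Metric.tendsto_atTop.1 (h i)) (ε / (2 * (I + 1))) (by positivity)
    filter_upwards [eventually_ge_atTop N] with k hk
    have := hN k hk
    rwa [Real.dist_eq] at this
  obtain ⟨N, hN⟩ := eventually_atTop.1 hev
  refine ⟨N, fun k hk => ?_⟩
  rw [Real.dist_eq, sub_zero, abs_of_nonneg (wD_nonneg _ _ _)]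
  -- split the sum
  have hsum := wD_summable u (g k) G
  have hsplit := (Summable.sum_add_tsum_nat_add (f := fun i => (2⁻¹ : ℝ) ^ i * min 1 |g k (u i) - G (u i)|)
    I hsum).symm
  rw [wD, hsplit]
  have h1 : ∑ i ∈ Finset.range I, (2⁻¹ : ℝ) ^ i * min 1 |g k (u i) - G (u i)| ≤ ε / 2 := by
    calc ∑ i ∈ Finset.range I, (2⁻¹ : ℝ) ^ i * min 1 |g k (u i) - G (u i)|
        ≤ ∑ i ∈ Finset.range I, ε / (2 * (I + 1)) := by
          apply Finset.sum_le_sum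
          intro i hi
          calc (2⁻¹ : ℝ) ^ i * min 1 |g k (u i) - G (u i)|
              ≤ 1 * min 1 |g k (u i) - G (u i)| :=
                mul_le_mul_of_nonneg_right (pow_le_one₀ (by norm_num) (by norm_num))
                  (le_min zero_le_one (abs_nonneg _))
            _ = min 1 |g k (u i) - G (u i)| := one_mul _
            _ ≤ |g k (u i) - G (u i)| := min_le_right _ _
            _ ≤ ε / (2 * (I + 1)) := (hN k hk i hi).le
      _ = I * (ε / (2 * (I + 1))) := by rw [Finset.sum_const, Finset.card_range, nsmul_eq_mul]
      _ ≤ ε / 2 := by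
          rw [mul_comm, div_mul_eq_mul_div, div_le_div_iff₀ (by positivity) (by norm_num)]
          nlinarith [hε.le, (Nat.cast_nonneg I : (0:ℝ) ≤ I)]
  have h2 : ∑' i, (2⁻¹ : ℝ) ^ (i + I) * min 1 |g k (u (i + I)) - G (u (i + I))| ≤ 2 * (2⁻¹:ℝ) ^ I := by
    have hgeo : Summable fun i : ℕ => (2⁻¹ : ℝ) ^ (i + I) :=
      ((summable_geometric_of_lt_one (r := (2⁻¹:ℝ)) (by norm_num) (by norm_num)).mul_right
        ((2⁻¹:ℝ) ^ I)).congr (fun i => by rw [pow_add])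
    calc ∑' i, (2⁻¹ : ℝ) ^ (i + I) * min 1 |g k (u (i + I)) - G (u (i + I))|
        ≤ ∑' i : ℕ, (2⁻¹ : ℝ) ^ (i + I) := by
          refine Summable.tsum_le_tsum (fun i => ?_)
            ((hsum.comp_injective (add_left_injective I)).congr (fun i => rfl)) hgeo
          calc (2⁻¹ : ℝ) ^ (i + I) * min 1 |g k (u (i + I)) - G (u (i + I))|
              ≤ (2⁻¹ : ℝ) ^ (i + I) * 1 :=
                mul_le_mul_of_nonneg_left (min_le_left _ _) (by positivity)
            _ = (2⁻¹ : ℝ) ^ (i + I) := mul_one _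
      _ = (2⁻¹:ℝ) ^ I * ∑' i : ℕ, (2⁻¹ : ℝ) ^ i := by
          rw [← tsum_mul_left]
          congr 1
          funext i
          rw [pow_add, mul_comm]
      _ = (2⁻¹:ℝ) ^ I * 2 := by
          rw [tsum_geometric_of_lt_one (by norm_num) (by norm_num)]
          norm_num
      _ = 2 * (2⁻¹:ℝ) ^ I := mul_comm _ _
  linarith

theorem seq_alaoglu {X : Type*} [NormedAddCommGroup X] [NormedSpace ℝ X]
    {u : ℕ → X} (hu : DenseRange u) (g : ℕ → X →L[ℝ] ℝ) {C : ℝ} (hC0 : 0 ≤ C)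
    (hC : ∀ n, ‖g n‖ ≤ C) :
    ∃ φ : ℕ → ℕ, StrictMono φ ∧ ∃ G : X →L[ℝ] ℝ, ‖G‖ ≤ C ∧
      ∀ x, Tendsto (fun k => g (φ k) x) atTop (𝓝 (G x)) := by
  set s : Set (ℕ → ℝ) := Set.univ.pi fun i => Set.Icc (-(C * ‖u i‖)) (C * ‖u i‖) with hs_def
  have hs : IsCompact s := isCompact_univ_pi fun i => isCompact_Icc
  have hmem : ∀ n, (fun i => g n (u i)) ∈ s := by
    intro n
    rw [hs_def, Set.mem_univ_pi]
    intro i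
    have h1 : |g n (u i)| ≤ C * ‖u i‖ := by
      calc |g n (u i)| = ‖g n (u i)‖ := (Real.norm_eq_abs _).symm
        _ ≤ ‖g n‖ * ‖u i‖ := (g n).le_opNorm _
        _ ≤ C * ‖u i‖ := by
            have := hC n
            exact mul_le_mul_of_nonneg_right this (norm_nonneg _)
    exact ⟨neg_le_of_abs_le h1, le_of_abs_le h1⟩
  obtain ⟨L, _, φ, hφ, hconv⟩ := hs.tendsto_subseq (x := fun n i => g n (u i)) hmem
  have hptwise : ∀ i, Tendsto (fun k => g (φ k) (u i)) atTop (𝓝 (L i)) := by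
    intro i
    exact (tendsto_pi_nhds.1 hconv) i
  have hcauchy : ∀ x : X, CauchySeq fun k => g (φ k) x := by
    intro x
    rw [Metric.cauchySeq_iff]
    intro ε hε
    obtain ⟨i, hi⟩ := Metric.denseRange_iff.1 hu x (ε / (4 * (C + 1))) (by positivity)
    have hCs : CauchySeq fun k => g (φ k) (u i) := (hptwise i).cauchySeq
    obtain ⟨N, hN⟩ := Metric.cauchySeq_iff.1 hCs (ε / 2) (by positivity)
    refine ⟨N, fun m hm n hn => ?_⟩
    have key : ∀ j, dist (g (φ j) x) (g (φ j) (u i)) ≤ ε / 4 := by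
      intro j
      rw [dist_eq_norm, ← map_sub]
      calc ‖g (φ j) (x - u i)‖ ≤ ‖g (φ j)‖ * ‖x - u i‖ := (g (φ j)).le_opNorm _
        _ ≤ C * ‖x - u i‖ := mul_le_mul_of_nonneg_right (hC _) (norm_nonneg _)
        _ ≤ (C + 1) * (ε / (4 * (C + 1))) := by
            apply mul_le_mul (by linarith) _ (norm_nonneg _) (by linarith)
            rw [← dist_eq_norm]
            exact hi.le
        _ = ε / 4 := by field_simp
    calc dist (g (φ m) x) (g (φ n) x)
        ≤ dist (g (φ m) x) (g (φ m) (u i)) + dist (g (φ m) (u i)) (g (φ n) (u i))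
          + dist (g (φ n) (u i)) (g (φ n) x) := dist_triangle4 _ _ _ _
      _ < ε / 4 + ε / 2 + ε / 4 := by
          have := hN m hm n hn
          have k1 := key m
          have k2 := key n
          rw [dist_comm (g (φ n) (u i))] at *
          linarith [key m, key n, hN m hm n hn]
      _ = ε := by ring
  have hlim : ∀ x : X, ∃ a : ℝ, Tendsto (fun k => g (φ k) x) atTop (𝓝 a) := fun x =>
    cauchySeq_tendsto_of_complete (hcauchy x)
  choose Lx hLx using hlim
  have hadd : ∀ x y, Lx (x + y) = Lx x + Lx y := by
    intro x y
    refine tendsto_nhds_unique ?_ ((hLx x).add (hLx y))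
    have : (fun k => g (φ k) (x + y)) = fun k => g (φ k) x + g (φ k) y := by
      funext k; rw [map_add]
    rw [← this]
    exact hLx (x + y)
  have hsmul : ∀ (a : ℝ) (x), Lx (a • x) = a * Lx x := by
    intro a x
    refine tendsto_nhds_unique ?_ ((hLx x).const_mul a)
    have : (fun k => g (φ k) (a • x)) = fun k => a * g (φ k) x := by
      funext k; rw [map_smul]; rfl
    rw [← this]
    exact hLx (a • x)
  have hbound : ∀ x, ‖Lx x‖ ≤ C * ‖x‖ := by
    intro x
    refine le_of_tendsto (hLx x).norm (Eventually.of_forall fun k => ?_)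
    calc ‖g (φ k) x‖ ≤ ‖g (φ k)‖ * ‖x‖ := (g (φ k)).le_opNorm _
      _ ≤ C * ‖x‖ := mul_le_mul_of_nonneg_right (hC _) (norm_nonneg _)
  set G₀ : X →ₗ[ℝ] ℝ := { toFun := Lx, map_add' := hadd, map_smul' := hsmul } with hG₀
  refine ⟨φ, hφ, G₀.mkContinuous C hbound, LinearMap.mkContinuous_norm_le _ hC0 _, fun x => hLx x⟩

theorem correction {u : ℕ → X} (hu : DenseRange u) (g : ℕ → X →L[ℝ] ℝ) {C : ℝ}
    (hC0 : 0 ≤ C) (hC : ∀ n, ‖g n‖ ≤ C) (Y : Submodule ℝ X)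
    (hg0 : ∀ y ∈ Y, Tendsto (fun n => g n y) atTop (𝓝 0)) :
    ∃ e : ℕ → X →L[ℝ] ℝ, (∀ n, ‖e n‖ ≤ 2 * C) ∧ (∀ n, ∀ y ∈ Y, e n y = g n y) ∧
      ∀ x, Tendsto (fun n => e n x) atTop (𝓝 0) := by
  classical
  set K : Set (X →L[ℝ] ℝ) := {h | ‖h‖ ≤ C ∧ ∀ y ∈ Y, h y = 0} with hK
  have h0K : (0 : X →L[ℝ] ℝ) ∈ K := ⟨by simpa using hC0, fun y _ => rfl⟩
  -- main claim: asymptotically `g n` is wD-close to `K`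
  have claim : ∀ ε > 0, ∀ᶠ n in atTop, ∃ h ∈ K, wD u (g n) h < ε := by
    by_contra hcon
    push_neg at hcon
    obtain ⟨ε, hε, hfr⟩ := hcon
    have hfr' : ∃ᶠ n in atTop, ∀ h ∈ K, ε ≤ wD u (g n) h := hfr
    obtain ⟨ψ, hψ, hψP⟩ := Filter.extraction_of_frequently_atTop hfr'
    obtain ⟨φ, hφ, G, hGnorm, hGconv⟩ := seq_alaoglu hu (fun k => g (ψ k)) hC0 (fun k => hC _)
    have hGK : G ∈ K := by
      refine ⟨hGnorm, fun y hy => ?_⟩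
      refine tendsto_nhds_unique ((hGconv y)) ?_
      have hsub : Tendsto (fun k => ψ (φ k)) atTop atTop :=
        (hψ.comp hφ).tendsto_atTop
      exact (hg0 y hy).comp hsub
    have hconv0 : Tendsto (fun k => wD u (g (ψ (φ k))) G) atTop (𝓝 0) :=
      wD_tendsto_zero u (fun k => g (ψ (φ k))) G (fun i => hGconv (u i))
    obtain ⟨N, hN⟩ := Metric.tendsto_atTop.1 hconv0 ε hε
    have h1 := hN N le_rfl
    rw [Real.dist_eq, sub_zero, abs_of_nonneg (wD_nonneg _ _ _)] at h1
    exact absurd h1 (not_lt.2 (hψP (φ N) G hGK))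
  -- choose near-optimal corrections
  have hsel : ∀ n : ℕ, ∃ h ∈ K, wD u (g n) h
      < sInf ((fun h => wD u (g n) h) '' K) + 1 / (n + 1) := by
    intro n
    have hne : ((fun h => wD u (g n) h) '' K).Nonempty := ⟨_, Set.mem_image_of_mem _ h0K⟩
    have hbdd : BddBelow ((fun h => wD u (g n) h) '' K) := by
      refine ⟨0, fun x hx => ?_⟩
      obtain ⟨h, _, rfl⟩ := hx
      exact wD_nonneg _ _ _
    have hlt : sInf ((fun h => wD u (g n) h) '' K)
        < sInf ((fun h => wD u (g n) h) '' K) + 1 / (n + 1) := by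
      have : (0:ℝ) < 1 / (n + 1) := by positivity
      linarith
    obtain ⟨x, hx, hxlt⟩ := (csInf_lt_iff hbdd hne).1 hlt
    obtain ⟨h, hhK, rfl⟩ := hx
    exact ⟨h, hhK, hxlt⟩
  choose hc hcK hclt using hsel
  -- wD (g n) (hc n) → 0
  have hD0 : Tendsto (fun n => wD u (g n) (hc n)) atTop (𝓝 0) := by
    rw [Metric.tendsto_atTop]
    intro ε hε
    have hev1 := claim (ε / 3) (by positivity)
    have hev2 : ∀ᶠ n : ℕ in atTop, 1 / ((n : ℝ) + 1) < ε / 3 := by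
      have := tendsto_one_div_add_atTop_nhds_zero_nat (𝕜 := ℝ)
      obtain ⟨N, hN⟩ := (Metric.tendsto_atTop.1 this) (ε / 3) (by positivity)
      filter_upwards [eventually_ge_atTop N] with n hn
      have := hN n hn
      rwa [Real.dist_eq, sub_zero, abs_of_pos (by positivity)] at this
    obtain ⟨N, hN⟩ := eventually_atTop.1 (hev1.and hev2)
    refine ⟨N, fun n hn => ?_⟩
    obtain ⟨⟨h, hhK, hhlt⟩, h2⟩ := hN n hn
    have hinf_le : sInf ((fun h => wD u (g n) h) '' K) ≤ wD u (g n) h := by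
      apply csInf_le ⟨0, fun x hx => ?_⟩ (Set.mem_image_of_mem _ hhK)
      obtain ⟨h', _, rfl⟩ := hx
      exact wD_nonneg _ _ _
    have := hclt n
    rw [Real.dist_eq, sub_zero, abs_of_nonneg (wD_nonneg _ _ _)]
    calc wD u (g n) (hc n) < sInf ((fun h => wD u (g n) h) '' K) + 1 / (n + 1) := hclt n
      _ ≤ wD u (g n) h + 1 / (n + 1) := by linarith
      _ < ε / 3 + ε / 3 := by push_cast at h2 ⊢; linarith
      _ < ε := by linarith
  -- coordinatewise convergence
  have hcoord : ∀ i, Tendsto (fun n => g n (u i) - hc n (u i)) atTop (𝓝 0) := by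
    intro i
    rw [Metric.tendsto_atTop]
    intro ε hε
    set δ := min ε 1 / 2 with hδ
    have hδpos : 0 < δ := by
      rw [hδ]; have := lt_min hε one_pos; positivity
    obtain ⟨N, hN⟩ := (Metric.tendsto_atTop.1 hD0) ((2⁻¹:ℝ) ^ i * δ) (by positivity)
    refine ⟨N, fun n hn => ?_⟩
    have h1 := hN n hn
    rw [Real.dist_eq, sub_zero, abs_of_nonneg (wD_nonneg _ _ _)] at h1
    have h2 := term_le_wD u (g n) (hc n) i
    have h3 : min 1 |g n (u i) - hc n (u i)| < δ := by
      have hpow : (0:ℝ) < (2⁻¹:ℝ) ^ i := by positivity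
      nlinarith
    have h4 : |g n (u i) - hc n (u i)| < δ := by
      rcases lt_or_ge |g n (u i) - hc n (u i)| 1 with hlt | hge
      · rwa [min_eq_right hlt.le] at h3
      · rw [min_eq_left hge] at h3
        have : δ ≤ 1 / 2 := by
          rw [hδ]
          have := min_le_right ε 1
          linarith
        linarith
    rw [Real.dist_eq, sub_zero]
    have : δ ≤ ε / 2 := by
      rw [hδ]
      have := min_le_left ε 1
      linarith
    linarith
  -- full convergence and conclusion
  refine ⟨fun n => g n - hc n, fun n => ?_, fun n y hy => ?_, fun x => ?_⟩
  · calc ‖g n - hc n‖ ≤ ‖g n‖ + ‖hc n‖ := norm_sub_le _ _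
      _ ≤ C + C := add_le_add (hC n) (hcK n).1
      _ = 2 * C := by ring
  · have := (hcK n).2 y hy
    simp [this]
  · rw [Metric.tendsto_atTop]
    intro ε hε
    obtain ⟨w, hw⟩ := Metric.denseRange_iff.1 hu x (ε / (4 * (2 * C + 1))) (by positivity)
    obtain ⟨N, hN⟩ := (Metric.tendsto_atTop.1 (hcoord w)) (ε / 2) (by positivity)
    refine ⟨N, fun n hn => ?_⟩
    have h1 := hN n hn
    rw [Real.dist_eq, sub_zero] at h1
    rw [Real.dist_eq, sub_zero]
    have heq : (g n - hc n) x = (g n - hc n) (u w) + (g n - hc n) (x - u w) := by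
      rw [← map_add]
      congr 1
      abel
    have hnorm : ‖(g n - hc n)‖ ≤ 2 * C := by
      calc ‖g n - hc n‖ ≤ ‖g n‖ + ‖hc n‖ := norm_sub_le _ _
        _ ≤ C + C := add_le_add (hC n) (hcK n).1
        _ = 2 * C := by ring
    have h2 : |(g n - hc n) (x - u w)| ≤ ε / 4 := by
      calc |(g n - hc n) (x - u w)| = ‖(g n - hc n) (x - u w)‖ := (Real.norm_eq_abs _).symm
        _ ≤ ‖g n - hc n‖ * ‖x - u w‖ := (g n - hc n).le_opNorm _
        _ ≤ (2 * C + 1) * (ε / (4 * (2 * C + 1))) := by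
            apply mul_le_mul (by linarith) _ (norm_nonneg _) (by linarith)
            rw [← dist_eq_norm]
            exact hw.le
        _ = ε / 4 := by field_simp
    have h3 : |(g n - hc n) (u w)| < ε / 2 := by
      have : (g n - hc n) (u w) = g n (u w) - hc n (u w) := rfl
      rwa [this]
    calc |(g n - hc n) x| ≤ |(g n - hc n) (u w)| + |(g n - hc n) (x - u w)| := by
          rw [heq]; exact abs_add_le _ _
      _ < ε / 2 + ε / 4 := by linarith
      _ < ε := by linarith

end WD

section
variable {X : Type*} [NormedAddCommGroup X] [NormedSpace ℝ X]

/-- Package a pointwise-vanishing, uniformly bounded sequence of functionals into an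
operator into `c₀`. -/
noncomputable def c0Mk (e : ℕ → X →L[ℝ] ℝ) (M : ℝ) (hbd : ∀ n, ‖e n‖ ≤ M)
    (h0 : ∀ x, Tendsto (fun n => e n x) atTop (𝓝 0)) : X →L[ℝ] C₀(ℕ, ℝ) :=
  LinearMap.mkContinuous
    { toFun := fun x =>
        { toFun := fun n => e n x
          continuous_toFun := continuous_of_discreteTopology
          zero_at_infty' := by rw [cocompact_eq_atTop]; exact h0 x }
      map_add' := fun x y => by ext n; simp
      map_smul' := fun a x => by ext n; simp }
    M (fun x => by
      apply c0_norm_le (mul_nonneg (le_trans (norm_nonneg _) (hbd 0)) (norm_nonneg x))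
      intro n
      calc |e n x| = ‖e n x‖ := (Real.norm_eq_abs _).symm
        _ ≤ ‖e n‖ * ‖x‖ := (e n).le_opNorm _
        _ ≤ M * ‖x‖ := mul_le_mul_of_nonneg_right (hbd n) (norm_nonneg _))

theorem c0Mk_apply (e : ℕ → X →L[ℝ] ℝ) (M : ℝ) (hbd : ∀ n, ‖e n‖ ≤ M)
    (h0 : ∀ x, Tendsto (fun n => e n x) atTop (𝓝 0)) (x : X) (n : ℕ) :
    c0Mk e M hbd h0 x n = e n x := rfl

theorem c0Mk_norm_le (e : ℕ → X →L[ℝ] ℝ) (M : ℝ) (hbd : ∀ n, ‖e n‖ ≤ M)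
    (h0 : ∀ x, Tendsto (fun n => e n x) atTop (𝓝 0)) (x : X) :
    ‖c0Mk e M hbd h0 x‖ ≤ M * ‖x‖ :=
  (c0Mk e M hbd h0).le_of_opNorm_le
    (LinearMap.mkContinuous_norm_le _ (le_trans (norm_nonneg _) (hbd 0)) _) x

/-- Interleave two operators into `c₀` into a single one. -/
noncomputable def interleave (A B : X →L[ℝ] C₀(ℕ, ℝ)) : X →L[ℝ] C₀(ℕ, ℝ) :=
  LinearMap.mkContinuous
    { toFun := fun x =>
        { toFun := fun n => if n % 2 = 0 then A x (n / 2) else B x (n / 2)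
          continuous_toFun := continuous_of_discreteTopology
          zero_at_infty' := by
            rw [cocompact_eq_atTop, Metric.tendsto_atTop]
            intro ε hε
            obtain ⟨N₁, hN₁⟩ := Metric.tendsto_atTop.1 (c0_tendsto (A x)) ε hε
            obtain ⟨N₂, hN₂⟩ := Metric.tendsto_atTop.1 (c0_tendsto (B x)) ε hε
            refine ⟨2 * (N₁ + N₂), fun n hn => ?_⟩
            have hdiv : N₁ + N₂ ≤ n / 2 := (Nat.le_div_iff_mul_le two_pos).2 (by omega)
            by_cases h : n % 2 = 0
            · simpa [h] using hN₁ (n / 2) (by omega)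
            · simpa [h] using hN₂ (n / 2) (by omega) }
      map_add' := fun x y => by
        ext n
        by_cases h : n % 2 = 0 <;> simp [h]
      map_smul' := fun a x => by
        ext n
        by_cases h : n % 2 = 0 <;> simp [h] }
    (‖A‖ + ‖B‖) (fun x => by
      apply c0_norm_le (by positivity)
      intro n
      show |if n % 2 = 0 then A x (n / 2) else B x (n / 2)| ≤ (‖A‖ + ‖B‖) * ‖x‖
      by_cases h : n % 2 = 0
      · rw [if_pos h]
        calc |A x (n / 2)| ≤ ‖A x‖ := c0_le_norm _ _
          _ ≤ ‖A‖ * ‖x‖ := A.le_opNorm x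
          _ ≤ (‖A‖ + ‖B‖) * ‖x‖ := by
              apply mul_le_mul_of_nonneg_right _ (norm_nonneg x)
              linarith [norm_nonneg B]
      · rw [if_neg h]
        calc |B x (n / 2)| ≤ ‖B x‖ := c0_le_norm _ _
          _ ≤ ‖B‖ * ‖x‖ := B.le_opNorm x
          _ ≤ (‖A‖ + ‖B‖) * ‖x‖ := by
              apply mul_le_mul_of_nonneg_right _ (norm_nonneg x)
              linarith [norm_nonneg A])

theorem norm_le_interleave_left (A B : X →L[ℝ] C₀(ℕ, ℝ)) (x : X) :
    ‖A x‖ ≤ ‖interleave A B x‖ := by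
  apply c0_norm_le (norm_nonneg _)
  intro n
  have : A x n = interleave A B x (2 * n) := by
    show A x n = if (2 * n) % 2 = 0 then A x ((2 * n) / 2) else B x ((2 * n) / 2)
    simp [Nat.mul_div_cancel_left n two_pos]
  rw [this]
  exact c0_le_norm _ _

theorem norm_le_interleave_right (A B : X →L[ℝ] C₀(ℕ, ℝ)) (x : X) :
    ‖B x‖ ≤ ‖interleave A B x‖ := by
  apply c0_norm_le (norm_nonneg _)
  intro n
  have : B x n = interleave A B x (2 * n + 1) := by
    show B x n = if (2 * n + 1) % 2 = 0 then A x ((2 * n + 1) / 2) else B x ((2 * n + 1) / 2)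
    have h1 : (2 * n + 1) % 2 = 1 := by omega
    have h2 : (2 * n + 1) / 2 = n := by omega
    simp [h1, h2]
  rw [this]
  exact c0_le_norm _ _

/-- Coordinate functionals of an operator into `c₀`. -/
noncomputable def coordT (T : X →L[ℝ] C₀(ℕ, ℝ)) (n : ℕ) : X →L[ℝ] ℝ :=
  LinearMap.mkContinuous
    { toFun := fun x => T x n
      map_add' := fun x y => by simp
      map_smul' := fun a x => by simp }
    ‖T‖ (fun x => by
      calc ‖T x n‖ = |T x n| := Real.norm_eq_abs _
        _ ≤ ‖T x‖ := c0_le_norm _ _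
        _ ≤ ‖T‖ * ‖x‖ := T.le_opNorm x)

theorem coordT_apply (T : X →L[ℝ] C₀(ℕ, ℝ)) (n : ℕ) (x : X) : coordT T n x = T x n := rfl

theorem coordT_norm_le (T : X →L[ℝ] C₀(ℕ, ℝ)) (n : ℕ) : ‖coordT T n‖ ≤ ‖T‖ :=
  LinearMap.mkContinuous_norm_le _ (norm_nonneg T) _

/-- The quotient map as a continuous linear map. -/
noncomputable def mkQCLM (Y : Submodule ℝ X) : X →L[ℝ] (X ⧸ Y) :=
  LinearMap.mkContinuous Y.mkQ 1
    (fun x => by simpa using Submodule.Quotient.norm_mk_le Y x)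

theorem mkQCLM_apply (Y : Submodule ℝ X) (x : X) :
    mkQCLM Y x = Submodule.Quotient.mk x := rfl

end

/-- Being isomorphic to a subspace of `c₀(ℕ)` is a three-space property: if `X` is a Banach
space, `Y` a closed subspace, and both `Y` and `X/Y` linearly embed into `c₀(ℕ)`, then `X`
linearly embeds into `c₀(ℕ)`. -/
theorem stmt8 {X : Type*} [NormedAddCommGroup X] [NormedSpace ℝ X] [CompleteSpace X]
    (Y : Submodule ℝ X) (hYclosed : IsClosed (Y : Set X))
    (hY : ∃ T : Y →L[ℝ] C₀(ℕ, ℝ), ∃ c : ℝ, 0 < c ∧ ∀ y : Y, c * ‖y‖ ≤ ‖T y‖)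
    (hQ : ∃ S : (X ⧸ Y) →L[ℝ] C₀(ℕ, ℝ), ∃ c : ℝ, 0 < c ∧ ∀ q : X ⧸ Y, c * ‖q‖ ≤ ‖S q‖) :
    ∃ R : X →L[ℝ] C₀(ℕ, ℝ), ∃ c : ℝ, 0 < c ∧ ∀ x : X, c * ‖x‖ ≤ ‖R x‖ := by
  obtain ⟨T, c, hc, hT⟩ := hY
  obtain ⟨S, c', hc', hS⟩ := hQ
  -- X is separable
  haveI hsepY : TopologicalSpace.SeparableSpace Y := sep_pull T hc hT
  haveI hsepQ : TopologicalSpace.SeparableSpace (X ⧸ Y) := sep_pull S hc' hS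
  haveI hsepX : TopologicalSpace.SeparableSpace X := sep_ext Y hsepY hsepQ
  obtain ⟨u, hu⟩ := TopologicalSpace.exists_dense_seq X
  -- coordinate functionals of T, extended to X by Hahn-Banach
  have hHB := fun n => exists_extension_norm_eq Y (coordT T n)
  choose g hg hgnorm using hHB
  have hgle : ∀ n, ‖g n‖ ≤ ‖T‖ := fun n => (hgnorm n).le.trans (coordT_norm_le T n)
  have hg0 : ∀ y ∈ Y, Tendsto (fun n => g n y) atTop (𝓝 0) := by
    intro y hy
    have he : ∀ n, g n y = T ⟨y, hy⟩ n := by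
      intro n
      have h4 := hg n ⟨y, hy⟩
      rw [coordT_apply] at h4
      exact h4
    rw [show (fun n => g n y) = fun n => T ⟨y, hy⟩ n from funext he]
    exact c0_tendsto _
  -- Sobczyk correction
  obtain ⟨e, hebd, heY, he0⟩ := correction hu g (norm_nonneg T) hgle Y hg0
  -- the extension of T to X
  set A : X →L[ℝ] C₀(ℕ, ℝ) := c0Mk e (2 * ‖T‖) hebd he0 with hA
  have hAY : ∀ (y : Y), A (y : X) = T y := by
    intro y
    ext n
    rw [hA, c0Mk_apply]
    rw [heY n (y : X) y.2, hg n y, coordT_apply]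
  set B : X →L[ℝ] C₀(ℕ, ℝ) := S.comp (mkQCLM Y) with hB
  have hden : (0:ℝ) < c' + (2 * ‖T‖ + c) := by linarith [norm_nonneg T]
  have hden2 : (0:ℝ) < 2 * ‖T‖ + c := by linarith [norm_nonneg T]
  refine ⟨interleave A B, c * c' / (c' + (2 * ‖T‖ + c)),
    div_pos (mul_pos hc hc') hden, fun x => ?_⟩
  set R := interleave A B with hR
  have hBx : B x = S (Submodule.Quotient.mk x) := by rw [hB]; simp [mkQCLM_apply]
  have h2 : c' * ‖(Submodule.Quotient.mk x : X ⧸ Y)‖ ≤ ‖R x‖ := by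
    calc c' * ‖(Submodule.Quotient.mk x : X ⧸ Y)‖ ≤ ‖S (Submodule.Quotient.mk x)‖ := hS _
      _ = ‖B x‖ := by rw [hBx]
      _ ≤ ‖R x‖ := norm_le_interleave_right A B x
  have h1 : c * ‖x‖ ≤ ‖R x‖ + (2 * ‖T‖ + c) * ‖(Submodule.Quotient.mk x : X ⧸ Y)‖ := by
    refine le_of_forall_pos_le_add fun ε hε => ?_
    have hδ : 0 < ε / (2 * ‖T‖ + c) := div_pos hε hden2
    obtain ⟨m, hm, hmlt⟩ := Submodule.Quotient.norm_mk_lt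
      (Submodule.Quotient.mk x : X ⧸ Y) hδ
    have hmem : x - m ∈ Y := by
      rw [← Submodule.Quotient.mk_eq_zero]
      rw [Submodule.Quotient.mk_sub, hm]
      abel
    have hTy : c * ‖x - m‖ ≤ ‖A (x - m)‖ := by
      have h3 := hT ⟨x - m, hmem⟩
      rw [← hAY ⟨x - m, hmem⟩] at h3
      have hny : ‖(⟨x - m, hmem⟩ : Y)‖ = ‖x - m‖ := rfl
      rwa [hny] at h3
    have hAm : ‖A m‖ ≤ 2 * ‖T‖ * ‖m‖ := c0Mk_norm_le e (2 * ‖T‖) hebd he0 m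
    have hAx : ‖A (x - m)‖ ≤ ‖A x‖ + ‖A m‖ := by
      calc ‖A (x - m)‖ = ‖A x - A m‖ := by rw [map_sub]
        _ ≤ ‖A x‖ + ‖A m‖ := norm_sub_le _ _
    have hAR : ‖A x‖ ≤ ‖R x‖ := norm_le_interleave_left A B x
    have hxm : ‖x‖ ≤ ‖x - m‖ + ‖m‖ := by
      calc ‖x‖ = ‖(x - m) + m‖ := by congr 1; abel
        _ ≤ ‖x - m‖ + ‖m‖ := norm_add_le _ _
    have hmbd : ‖m‖ ≤ ‖(Submodule.Quotient.mk x : X ⧸ Y)‖ + ε / (2 * ‖T‖ + c) := hmlt.le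
    have hfield : (2 * ‖T‖ + c) * (ε / (2 * ‖T‖ + c)) = ε := by field_simp
    have e1 : c * ‖x‖ ≤ c * ‖x - m‖ + c * ‖m‖ := by
      have h4 := mul_le_mul_of_nonneg_left hxm hc.le
      rw [mul_add] at h4
      exact h4
    have e3 : (2 * ‖T‖ + c) * ‖m‖
        ≤ (2 * ‖T‖ + c) * ‖(Submodule.Quotient.mk x : X ⧸ Y)‖ + ε := by
      have h5 := mul_le_mul_of_nonneg_left hmbd hden2.le
      rw [mul_add, hfield] at h5
      exact h5
    have e4 : (2 * ‖T‖ + c) * ‖m‖ = 2 * ‖T‖ * ‖m‖ + c * ‖m‖ := by ring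
    linarith
  -- combine
  rw [div_mul_eq_mul_div, div_le_iff₀ hden]
  calc c * c' * ‖x‖ = (c * ‖x‖) * c' := by ring
    _ ≤ (‖R x‖ + (2 * ‖T‖ + c) * ‖(Submodule.Quotient.mk x : X ⧸ Y)‖) * c' :=
        mul_le_mul_of_nonneg_right h1 hc'.le
    _ = ‖R x‖ * c' + (2 * ‖T‖ + c) * (c' * ‖(Submodule.Quotient.mk x : X ⧸ Y)‖) := by ring
    _ ≤ ‖R x‖ * c' + (2 * ‖T‖ + c) * ‖R x‖ := by
        have h6 := mul_le_mul_of_nonneg_left h2 hden2.le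
        linarith
    _ = ‖R x‖ * (c' + (2 * ‖T‖ + c)) := by ring
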